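/- For every real s > 2, ∫₀^∞ h^s q₂(h) dh = (2^{−s/2}/24) s [ (s−1)(s²−2s+12) Z̃_{s/2}(0) − 4(s+4)(s+6) Z̃_{s/2}(1) + 64 Z̃_{s/2}(2) ], where Z̃_a(b) = Γ(a+2b) Z(2b, 2b; a+2b). -/

import Mathlib

open MeasureTheory

/-- The double Dirichlet series
`Z(α,β;γ) = ∑_{(n₁,n₂)∈ℤ²∖{(0,0)}} n₁^α n₂^β / (n₁²+n₂²)^γ`. -/
noncomputable def Zdd (α β : ℕ) (γ : ℝ) : ℝ :=
  ∑' n : {p : ℤ × ℤ // p ≠ (0, 0)},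
    ((n.1.1 : ℝ) ^ α * (n.1.2 : ℝ) ^ β) / ((n.1.1 : ℝ) ^ 2 + (n.1.2 : ℝ) ^ 2) ^ γ

/-- `Z̃_a(b) = Γ(a+2b) Z(2b,2b;a+2b)`. -/
noncomputable def Ztil (a : ℝ) (b : ℕ) : ℝ :=
  Real.Gamma (a + 2 * b) * Zdd (2 * b) (2 * b) (a + 2 * b)

/-- The polynomial `B_h(n₁,n₂)`. -/
noncomputable def Bpoly (h : ℝ) (n₁ n₂ : ℤ) : ℝ :=
  (8 / 3) * h * (-15 * (n₁ : ℝ) ^ 2 + 60 * h ^ 2 * (n₁ : ℝ) ^ 4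
    + 60 * h ^ 2 * (n₁ : ℝ) ^ 2 * (n₂ : ℝ) ^ 2
    - 60 * h ^ 4 * (n₁ : ℝ) ^ 6 - 180 * h ^ 4 * (n₁ : ℝ) ^ 4 * (n₂ : ℝ) ^ 2
    + 16 * h ^ 6 * (n₁ : ℝ) ^ 8 + 192 * h ^ 6 * (n₁ : ℝ) ^ 6 * (n₂ : ℝ) ^ 2
    - 80 * h ^ 6 * (n₁ : ℝ) ^ 4 * (n₂ : ℝ) ^ 4
    - 64 * h ^ 8 * (n₁ : ℝ) ^ 8 * (n₂ : ℝ) ^ 2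
    + 64 * h ^ 8 * (n₁ : ℝ) ^ 6 * (n₂ : ℝ) ^ 4)

/-- The density `q₂(h) = ∑_{(n₁,n₂)∈ℤ²∖{(0,0)}} e^{-2h²(n₁²+n₂²)} B_h(n₁,n₂)`
of the maximum height of two noncolliding Bessel bridges. -/
noncomputable def qTwo (h : ℝ) : ℝ :=
  ∑' n : {p : ℤ × ℤ // p ≠ (0, 0)},
    Real.exp (-2 * h ^ 2 * ((n.1.1 : ℝ) ^ 2 + (n.1.2 : ℝ) ^ 2)) * Bpoly h n.1.1 n.1.2

/-!
Write `N = n₁² + n₂²`. Expanding `B_h(n) = ∑ⱼ cⱼ(n₁², n₂²) h^(2j+1)`, every lattice point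
contributes a finite combination of Gaussian moments
`∫₀^∞ h^(s+2j+1) e^(-2Nh²) dh = Γ(s/2+j+1) / (2 (2N)^(s/2+j+1))`.
Since `|cⱼ| ≤ 200 N^(j+1)`, the absolute moments are `O(N^(-s/2))`, which is summable over the
punctured lattice for `s > 2`; so sum and integral may be exchanged. Averaging each term with its
image under `n₁ ↔ n₂` makes it symmetric in `x = n₁²`, `y = n₂²`, and the Gamma recursion
collapses it to a combination of `Γ(s/2+2b) (xy)^b / N^(s/2+2b)`, `b = 0, 1, 2`, whose sums are
the `Z̃_{s/2}(b)`.
-/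

open Set Real

lemma Gamma_add_nat_eq_mul_prod {a : ℝ} (ha : 0 < a) (n : ℕ) :
    Gamma (a + n) = Gamma a * ∏ i ∈ Finset.range n, (a + i) := by
  induction n with
  | zero => simp
  | succ n ih =>
    rw [Finset.prod_range_succ, Nat.cast_succ, ← add_assoc,
      Gamma_add_one (by positivity), ih]
    ring

noncomputable def gaussianMoment (s N : ℝ) (j : ℕ) : ℝ :=
  (2 * N) ^ (-(s / 2 + j + 1)) * Gamma (s / 2 + j + 1) / 2

section GaussianMoments

variable {s N : ℝ}

lemma rpow_mul_exp_mul_pow_eqOn (s N : ℝ) (j : ℕ) :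
    EqOn (fun h : ℝ => h ^ s * (exp (-2 * h ^ 2 * N) * h ^ (2 * j + 1)))
      (fun h => h ^ (s + (2 * j + 1 : ℕ)) * exp (-(2 * N) * h ^ (2 : ℝ))) (Ioi 0) := by
  intro h hh
  simp only [rpow_add_natCast hh.ne', rpow_two]
  ring_nf

lemma integrableOn_rpow_mul_exp_mul_pow (hs : -2 < s) (hN : 0 < N) (j : ℕ) :
    IntegrableOn (fun h : ℝ => h ^ s * (exp (-2 * h ^ 2 * N) * h ^ (2 * j + 1))) (Ioi 0) :=
  (integrableOn_rpow_mul_exp_neg_mul_rpow (by push_cast; linarith) two_pos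
    (by positivity)).congr_fun (rpow_mul_exp_mul_pow_eqOn s N j).symm measurableSet_Ioi

lemma integral_rpow_mul_exp_mul_pow (hs : -2 < s) (hN : 0 < N) (j : ℕ) :
    ∫ h in Ioi 0, h ^ s * (exp (-2 * h ^ 2 * N) * h ^ (2 * j + 1)) = gaussianMoment s N j := by
  rw [setIntegral_congr_fun measurableSet_Ioi (rpow_mul_exp_mul_pow_eqOn s N j),
    integral_rpow_mul_exp_neg_mul_rpow two_pos (by push_cast; linarith) (by positivity),
    gaussianMoment]
  push_cast
  ring_nf

lemma gaussianMoment_nonneg (hs : -2 < s) (hN : 0 < N) (j : ℕ) : 0 ≤ gaussianMoment s N j := by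
  have hj : (0 : ℝ) ≤ j := j.cast_nonneg
  unfold gaussianMoment
  have := Gamma_pos_of_pos (show 0 < s / 2 + j + 1 by linarith)
  positivity

lemma gaussianMoment_eq_mul_prod (hs : 0 < s) (hN : 0 < N) (j : ℕ) :
    gaussianMoment s N j = (2 * N) ^ (-(s / 2)) * Gamma (s / 2)
      * (∏ i ∈ Finset.range (j + 1), (s / 2 + i)) / (2 * (2 * N) ^ (j + 1)) := by
  rw [gaussianMoment, show s / 2 + j + 1 = s / 2 + ((j + 1 : ℕ) : ℝ) by push_cast; ring,
    Gamma_add_nat_eq_mul_prod (half_pos hs), neg_add', rpow_sub_natCast (by positivity)]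
  field_simp

end GaussianMoments

section OddPolynomialWeight

variable {s N : ℝ} {k : ℕ}

lemma rpow_mul_exp_mul_sum_eq (s N : ℝ) (c : Fin k → ℝ) :
    (fun h : ℝ => h ^ s * (exp (-2 * h ^ 2 * N) * ∑ j, c j * h ^ (2 * (j : ℕ) + 1)))
      = fun h => ∑ j, c j * (h ^ s * (exp (-2 * h ^ 2 * N) * h ^ (2 * (j : ℕ) + 1))) := by
  ext h
  simp only [Finset.mul_sum]
  exact Finset.sum_congr rfl fun j _ => by ring

lemma integrableOn_rpow_mul_exp_mul_sum (hs : -2 < s) (hN : 0 < N) (c : Fin k → ℝ) :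
    IntegrableOn (fun h : ℝ => h ^ s * (exp (-2 * h ^ 2 * N) * ∑ j, c j * h ^ (2 * (j : ℕ) + 1)))
      (Ioi 0) := by
  rw [rpow_mul_exp_mul_sum_eq]
  exact integrable_finsetSum _ fun (j : Fin k) _ =>
    (integrableOn_rpow_mul_exp_mul_pow hs hN j).const_mul (c j)

lemma integral_rpow_mul_exp_mul_sum (hs : -2 < s) (hN : 0 < N) (c : Fin k → ℝ) :
    ∫ h in Ioi 0, h ^ s * (exp (-2 * h ^ 2 * N) * ∑ j, c j * h ^ (2 * (j : ℕ) + 1))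
      = ∑ j, c j * gaussianMoment s N j := by
  rw [rpow_mul_exp_mul_sum_eq, integral_finsetSum _ fun (j : Fin k) _ =>
    (integrableOn_rpow_mul_exp_mul_pow hs hN j).const_mul (c j)]
  simp only [integral_const_mul, integral_rpow_mul_exp_mul_pow hs hN]

lemma integral_norm_rpow_mul_exp_mul_sum_le (hs : -2 < s) (hN : 0 < N) (c : Fin k → ℝ) :
    ∫ h in Ioi 0, ‖h ^ s * (exp (-2 * h ^ 2 * N) * ∑ j, c j * h ^ (2 * (j : ℕ) + 1))‖
      ≤ ∑ j, |c j| * gaussianMoment s N j := by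
  rw [← integral_rpow_mul_exp_mul_sum hs hN fun j => |c j|]
  refine setIntegral_mono_on (integrableOn_rpow_mul_exp_mul_sum hs hN c).norm
    (integrableOn_rpow_mul_exp_mul_sum hs hN _) measurableSet_Ioi fun h hh => ?_
  have hh : 0 < h := hh
  rw [norm_mul, norm_mul, norm_of_nonneg (by positivity), norm_of_nonneg (by positivity)]
  gcongr
  refine (norm_sum_le _ _).trans (Finset.sum_le_sum fun j _ => ?_)
  rw [norm_mul, norm_eq_abs, norm_of_nonneg (by positivity)]

lemma abs_mul_gaussianMoment_le (hs : -2 < s) (hN : 0 < N) {c K : ℝ} (j : ℕ)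
    (hc : |c| ≤ K * N ^ (j + 1)) :
    |c| * gaussianMoment s N j ≤ K * Gamma (s / 2 + j + 1) * N ^ (-(s / 2)) := by
  have hj : (0 : ℝ) ≤ j := j.cast_nonneg
  have hΓ := Gamma_pos_of_pos (show 0 < s / 2 + j + 1 by linarith)
  have hmoment : gaussianMoment s N j ≤ N ^ (-(s / 2 + j + 1)) * Gamma (s / 2 + j + 1) := by
    have := rpow_le_rpow_of_nonpos hN (by linarith : N ≤ 2 * N) (by linarith : -(s / 2 + j + 1) ≤ 0)
    unfold gaussianMoment
    nlinarith [rpow_pos_of_pos hN (-(s / 2 + j + 1))]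
  have hsplit : N ^ (-(s / 2 + j + 1)) = N ^ (-(s / 2)) / N ^ (j + 1) := by
    rw [← rpow_sub_natCast hN.ne']
    push_cast
    ring_nf
  calc |c| * gaussianMoment s N j
      ≤ K * N ^ (j + 1) * (N ^ (-(s / 2 + j + 1)) * Gamma (s / 2 + j + 1)) :=
        mul_le_mul hc hmoment (gaussianMoment_nonneg hs hN j) ((abs_nonneg c).trans hc)
    _ = K * Gamma (s / 2 + j + 1) * N ^ (-(s / 2)) := by
        rw [hsplit]
        field_simp

lemma sum_abs_mul_gaussianMoment_le (hs : -2 < s) (hN : 0 < N) {c : Fin k → ℝ} {K : ℝ}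
    (hc : ∀ j, |c j| ≤ K * N ^ ((j : ℕ) + 1)) :
    ∑ j, |c j| * gaussianMoment s N j
      ≤ (∑ j : Fin k, K * Gamma (s / 2 + (j : ℕ) + 1)) * N ^ (-(s / 2)) := by
  rw [Finset.sum_mul]
  exact Finset.sum_le_sum fun j _ => abs_mul_gaussianMoment_le hs hN j (hc j)

end OddPolynomialWeight

noncomputable def bCoeff (x y : ℝ) : Fin 5 → ℝ :=
  ![-40 * x, 160 * x * (x + y), -160 * x ^ 2 * (x + 3 * y),
    128 / 3 * x ^ 2 * (x ^ 2 + 12 * x * y - 5 * y ^ 2), 512 / 3 * x ^ 3 * y * (y - x)]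

lemma Bpoly_eq_sum (h : ℝ) (m k : ℤ) :
    Bpoly h m k = ∑ j, bCoeff ((m : ℝ) ^ 2) ((k : ℝ) ^ 2) j * h ^ (2 * (j : ℕ) + 1) := by
  simp only [Bpoly, bCoeff, Fin.sum_univ_five, Fin.isValue, Matrix.cons_val,
    Fin.coe_ofNat_eq_mod, Nat.reduceMod, Nat.reduceMul, Nat.reduceAdd]
  ring

lemma abs_bCoeff_le {x y : ℝ} (hx : 0 ≤ x) (hy : 0 ≤ y) (j : Fin 5) :
    |bCoeff x y j| ≤ 200 * (x + y) ^ ((j : ℕ) + 1) := by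
  rw [abs_le]
  fin_cases j <;> simp only [bCoeff, Fin.zero_eta, Fin.mk_one, Fin.reduceFinMk, Matrix.cons_val,
    Matrix.cons_val_zero, Matrix.cons_val_one, Fin.isValue] <;>
    constructor <;> (rw [← sub_nonneg]; ring_nf; positivity)

noncomputable def bMoment (s x y : ℝ) : ℝ := ∑ j, bCoeff x y j * gaussianMoment s (x + y) j

noncomputable def zTerm (a x y : ℝ) (b : ℕ) : ℝ :=
  Gamma (a + 2 * b) * (x * y) ^ b / (x + y) ^ (a + 2 * b)

lemma zTerm_eq_mul_prod {a x y : ℝ} (ha : 0 < a) (hxy : 0 < x + y) (b : ℕ) :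
    zTerm a x y b = Gamma a * (∏ i ∈ Finset.range (2 * b), (a + i)) * (x * y) ^ b
      / ((x + y) ^ a * (x + y) ^ (2 * b)) := by
  rw [zTerm, show a + 2 * b = a + ((2 * b : ℕ) : ℝ) by push_cast; ring,
    Gamma_add_nat_eq_mul_prod ha, rpow_add_natCast hxy.ne']

lemma zTerm_le {a x y : ℝ} (ha : 0 < a) (hx : 0 ≤ x) (hy : 0 ≤ y) (hxy : 0 < x + y) (b : ℕ) :
    zTerm a x y b ≤ Gamma (a + 2 * b) * (x + y) ^ (-a) := by
  have hΓ : 0 ≤ Gamma (a + 2 * b) := (Gamma_pos_of_pos (by positivity)).le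
  have hpow : (x * y) ^ b ≤ (x + y) ^ (2 * b) := by
    rw [pow_mul]
    exact pow_le_pow_left₀ (by positivity) (by nlinarith) b
  rw [zTerm, mul_div_assoc, show a + 2 * b = a + ((2 * b : ℕ) : ℝ) by push_cast; ring,
    rpow_add_natCast hxy.ne', rpow_neg hxy.le]
  gcongr
  calc (x * y) ^ b / ((x + y) ^ a * (x + y) ^ (2 * b))
      ≤ (x + y) ^ (2 * b) / ((x + y) ^ a * (x + y) ^ (2 * b)) := by gcongr
    _ = ((x + y) ^ a)⁻¹ := by field_simp

lemma bMoment_add_bMoment_swap {s x y : ℝ} (hs : 0 < s) (hxy : 0 < x + y) :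
    (bMoment s x y + bMoment s y x) / 2
      = 2 ^ (-s / 2) / 24 * s * ((s - 1) * (s ^ 2 - 2 * s + 12) * zTerm (s / 2) x y 0
        - 4 * (s + 4) * (s + 6) * zTerm (s / 2) x y 1 + 64 * zTerm (s / 2) x y 2) := by
  have hsplit : (2 * (x + y)) ^ (-(s / 2)) = 2 ^ (-s / 2) / (x + y) ^ (s / 2) := by
    rw [mul_rpow two_pos.le hxy.le, rpow_neg hxy.le, neg_div]
    ring
  simp only [bMoment, add_comm y x, gaussianMoment_eq_mul_prod hs hxy, hsplit,
    zTerm_eq_mul_prod (half_pos hs) hxy, Fin.sum_univ_five, Finset.prod_range_succ,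
    Finset.prod_range_zero, bCoeff, Fin.isValue, Matrix.cons_val, Fin.coe_ofNat_eq_mod,
    Nat.reduceMod, Nat.reduceMul, Nat.reduceAdd, Nat.cast_ofNat, Nat.cast_zero, Nat.cast_one]
  have := rpow_pos_of_pos hxy (s / 2)
  field_simp
  ring

lemma tsum_eq_tsum_add_comp_div_two {ι : Type*} (e : ι ≃ ι) {f : ι → ℝ} (hf : Summable f) :
    ∑' i, f i = ∑' i, (f i + f (e i)) / 2 := by
  rw [tsum_div_const, hf.tsum_add (g := fun i => f (e i)) (e.summable_iff.mpr hf),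
    e.tsum_eq]
  ring

local notation "Λ" => {p : ℤ × ℤ // p ≠ (0, 0)}

def latticeSwap : Λ ≃ Λ :=
  (Equiv.prodComm ℤ ℤ).subtypeEquiv fun p => by simp [Prod.ext_iff, and_comm]

lemma coe_latticeSwap (n : Λ) : (latticeSwap n : ℤ × ℤ) = (n : ℤ × ℤ).swap := rfl

lemma sq_add_sq_pos (n : Λ) : 0 < (n.1.1 : ℝ) ^ 2 + (n.1.2 : ℝ) ^ 2 := by
  obtain ⟨⟨m, k⟩, hmk⟩ := n
  rcases not_and_or.mp (mt (fun h => Prod.ext h.1 h.2) hmk) with hm | hk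
  · have : (m : ℝ) ≠ 0 := Int.cast_ne_zero.mpr hm
    positivity
  · have : (k : ℝ) ≠ 0 := Int.cast_ne_zero.mpr hk
    positivity

lemma summable_sq_add_sq_rpow_neg {a : ℝ} (ha : 1 < a) :
    Summable fun n : Λ => ((n.1.1 : ℝ) ^ 2 + (n.1.2 : ℝ) ^ 2) ^ (-a) := by
  let v : Λ → Fin 2 → ℤ := fun n => ![n.1.1, n.1.2]
  have hv : v.Injective := fun n n' h => Subtype.ext (Prod.ext (congrFun h 0) (congrFun h 1))
  refine ((EisensteinSeries.summable_one_div_norm_rpow (k := 2 * a) (by linarith)).comp_injective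
    hv).of_nonneg_of_le (fun n => by positivity) fun n => ?_
  have hN := sq_add_sq_pos n
  have hpos : 0 < ‖v n‖ := norm_pos_iff.mpr fun h0 =>
    n.2 (Prod.ext (congrFun h0 0) (congrFun h0 1))
  have hle : ‖v n‖ ≤ √((n.1.1 : ℝ) ^ 2 + (n.1.2 : ℝ) ^ 2) := by
    refine (pi_norm_le_iff_of_nonneg (sqrt_nonneg _)).mpr fun i => ?_
    fin_cases i <;> simp only [v, Int.norm_eq_abs] <;> apply abs_le_sqrt <;> simp [sq_nonneg]
  calc ((n.1.1 : ℝ) ^ 2 + (n.1.2 : ℝ) ^ 2) ^ (-a)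
      = √((n.1.1 : ℝ) ^ 2 + (n.1.2 : ℝ) ^ 2) ^ (-(2 * a)) := by
        rw [sqrt_eq_rpow, ← rpow_mul hN.le]
        ring_nf
    _ ≤ ‖v n‖ ^ (-(2 * a)) := rpow_le_rpow_of_nonpos hpos hle (by linarith)

noncomputable def qSummand (n : Λ) (h : ℝ) : ℝ :=
  exp (-2 * h ^ 2 * ((n.1.1 : ℝ) ^ 2 + (n.1.2 : ℝ) ^ 2)) * Bpoly h n.1.1 n.1.2

section LatticeTerms

variable {s : ℝ}

lemma integrableOn_rpow_mul_qSummand (hs : -2 < s) (n : Λ) :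
    IntegrableOn (fun h => h ^ s * qSummand n h) (Ioi 0) := by
  simp only [qSummand, Bpoly_eq_sum]
  exact integrableOn_rpow_mul_exp_mul_sum hs (sq_add_sq_pos n) _

lemma integral_rpow_mul_qSummand (hs : -2 < s) (n : Λ) :
    ∫ h in Ioi 0, h ^ s * qSummand n h = bMoment s ((n.1.1 : ℝ) ^ 2) ((n.1.2 : ℝ) ^ 2) := by
  simp only [qSummand, Bpoly_eq_sum]
  exact integral_rpow_mul_exp_mul_sum hs (sq_add_sq_pos n) _

lemma integral_norm_rpow_mul_qSummand_le (hs : -2 < s) (n : Λ) :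
    ∫ h in Ioi 0, ‖h ^ s * qSummand n h‖
      ≤ (∑ j : Fin 5, 200 * Gamma (s / 2 + (j : ℕ) + 1))
        * ((n.1.1 : ℝ) ^ 2 + (n.1.2 : ℝ) ^ 2) ^ (-(s / 2)) := by
  have hN := sq_add_sq_pos n
  simp only [qSummand, Bpoly_eq_sum]
  exact (integral_norm_rpow_mul_exp_mul_sum_le hs hN _).trans
    (sum_abs_mul_gaussianMoment_le hs hN fun j => abs_bCoeff_le (sq_nonneg _) (sq_nonneg _) j)

lemma summable_integral_norm_rpow_mul_qSummand (hs : 2 < s) :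
    Summable fun n : Λ => ∫ h in Ioi 0, ‖h ^ s * qSummand n h‖ :=
  ((summable_sq_add_sq_rpow_neg (by linarith)).mul_left _).of_nonneg_of_le
    (fun _ => integral_nonneg fun _ => norm_nonneg _)
    (integral_norm_rpow_mul_qSummand_le (by linarith))

lemma summable_bMoment (hs : 2 < s) :
    Summable fun n : Λ => bMoment s ((n.1.1 : ℝ) ^ 2) ((n.1.2 : ℝ) ^ 2) :=
  (summable_integral_norm_rpow_mul_qSummand hs).of_norm_bounded fun n => by
    rw [← integral_rpow_mul_qSummand (by linarith)]
    exact norm_integral_le_integral_norm _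

lemma integral_rpow_mul_qTwo (hs : 2 < s) :
    ∫ h in Ioi 0, h ^ s * qTwo h = ∑' n : Λ, bMoment s ((n.1.1 : ℝ) ^ 2) ((n.1.2 : ℝ) ^ 2) := by
  simp_rw [← integral_rpow_mul_qSummand (show -2 < s by linarith)]
  rw [integral_tsum_of_summable_integral_norm
    (fun n => integrableOn_rpow_mul_qSummand (by linarith) n)
    (summable_integral_norm_rpow_mul_qSummand hs)]
  simp only [qTwo, qSummand, tsum_mul_left]

end LatticeTerms

lemma summable_zTerm {a : ℝ} (ha : 1 < a) (b : ℕ) :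
    Summable fun n : Λ => zTerm a ((n.1.1 : ℝ) ^ 2) ((n.1.2 : ℝ) ^ 2) b :=
  ((summable_sq_add_sq_rpow_neg ha).mul_left _).of_nonneg_of_le
    (fun _ => by unfold zTerm; positivity)
    fun n => zTerm_le (by linarith) (sq_nonneg _) (sq_nonneg _) (sq_add_sq_pos n) b

lemma Ztil_eq_tsum_zTerm (a : ℝ) (b : ℕ) :
    Ztil a b = ∑' n : Λ, zTerm a ((n.1.1 : ℝ) ^ 2) ((n.1.2 : ℝ) ^ 2) b := by
  rw [Ztil, Zdd, ← tsum_mul_left]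
  refine tsum_congr fun n => ?_
  rw [zTerm, pow_mul, pow_mul, mul_pow]
  ring

/-- For every real `s > 2`, the `s`-th moment of `H₂` is
`(2^{-s/2}/24) s [ (s-1)(s²-2s+12) Z̃_{s/2}(0) - 4(s+4)(s+6) Z̃_{s/2}(1) + 64 Z̃_{s/2}(2) ]`. -/
theorem moment_H2_Ztil (s : ℝ) (hs : 2 < s) :
    (∫ h in Set.Ioi (0 : ℝ), h ^ s * qTwo h)
      = (2 ^ (-s / 2) / 24) * s *
        ((s - 1) * (s ^ 2 - 2 * s + 12) * Ztil (s / 2) 0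
          - 4 * (s + 4) * (s + 6) * Ztil (s / 2) 1
          + 64 * Ztil (s / 2) 2) := by
  have hz := summable_zTerm (show 1 < s / 2 by linarith)
  rw [integral_rpow_mul_qTwo hs,
    tsum_eq_tsum_add_comp_div_two latticeSwap (summable_bMoment hs)]
  simp only [coe_latticeSwap, Prod.fst_swap, Prod.snd_swap]
  rw [tsum_congr fun n => bMoment_add_bMoment_swap (by linarith) (sq_add_sq_pos n),
    tsum_mul_left, Summable.tsum_add (((hz 0).mul_left _).sub ((hz 1).mul_left _))
      ((hz 2).mul_left _), Summable.tsum_sub ((hz 0).mul_left _) ((hz 1).mul_left _),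
    tsum_mul_left, tsum_mul_left, tsum_mul_left, Ztil_eq_tsum_zTerm, Ztil_eq_tsum_zTerm,
    Ztil_eq_tsum_zTerm]
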